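/- arXiv:1603.05263 — 3 statements merged into one kernel-verified Lean document; each statement's English description precedes it below -/
import Mathlib

section
/- Let E be an isoperimetric-isodiametric set in (M, g) with enclosing ball B = B_{rad(E)}(x₀). Then E minimizes perimeter among volume-preserving compactly supported perturbations within B: P(E) ≤ P(F) for all F with F Δ E ⊂⊂ B and μ_g(F) = μ_g(E). -/
open MeasureTheory Metric Set Filter
open scoped ENNReal Topology Manifold

noncomputable section

/-- The perimeter of a set in a metric measure space, as (upper) Minkowski content. -/
def perimeter {M : Type*} [MetricSpace M] [MeasurableSpace M]
    (μ : Measure M) (E : Set M) : ℝ≥0∞ :=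
  Filter.limsup (fun ε : ℝ => μ (Metric.thickening ε E \ E) / ENNReal.ofReal ε) (𝓝[>] 0)

/-- The extrinsic radius of a measurable set. -/
def extRad {M : Type*} [MetricSpace M] [MeasurableSpace M] (μ : Measure M)
    (E : Set M) : ℝ≥0∞ :=
  ⨅ (z : M) (r : ℝ) (_ : μ (E \ Metric.ball z r) = 0), ENNReal.ofReal r

/-! A competitor that differs from `E` only inside the enclosing ball `B` is still enclosed by `B`
up to a null set, so its extrinsic radius is at most `rad E`. Minimality then gives
`rad E * P E ≤ rad F * P F ≤ rad E * P F`, and `rad E` cancels, being finite (it is bounded by the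
radius of `B`) and nonzero (otherwise `B` is empty and `F = E`). -/

section ExtRad

variable {M : Type*} [MetricSpace M] [MeasurableSpace M] {μ : Measure M} {E F : Set M} {z : M}
  {r : ℝ}

theorem extRad_le_ofReal (h : μ (E \ ball z r) = 0) : extRad μ E ≤ ENNReal.ofReal r :=
  iInf_le_of_le z (iInf_le_of_le r (iInf_le _ h))

theorem extRad_ne_top_of_measure_diff_ball_eq_zero (h : μ (E \ ball z r) = 0) :
    extRad μ E ≠ ⊤ :=
  ne_top_of_le_ne_top ENNReal.ofReal_ne_top (extRad_le_ofReal h)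

theorem measure_diff_ball_eq_zero_of_diff_subset (hE : μ (E \ ball z r) = 0)
    (hFE : F \ E ⊆ ball z r) : μ (F \ ball z r) = 0 :=
  measure_mono_null (fun _ ⟨hxF, hxB⟩ ↦ ⟨by_contra fun hxE ↦ hxB (hFE ⟨hxF, hxE⟩), hxB⟩ :
    F \ ball z r ⊆ E \ ball z r) hE

theorem extRad_le_of_diff_subset_ball (hE : μ (E \ ball z (extRad μ E).toReal) = 0)
    (hFE : F \ E ⊆ ball z (extRad μ E).toReal) : extRad μ F ≤ extRad μ E :=
  calc extRad μ F ≤ ENNReal.ofReal (extRad μ E).toReal :=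
        extRad_le_ofReal (measure_diff_ball_eq_zero_of_diff_subset hE hFE)
    _ = extRad μ E := ENNReal.ofReal_toReal (extRad_ne_top_of_measure_diff_ball_eq_zero hE)

end ExtRad

theorem isoperimetric_isodiametric_set_is_constrained_minimizer_general {M : Type*}
    [MetricSpace M] [MeasurableSpace M]
    (μ : Measure M) (E : Set M)
    (hmin : ∀ F : Set M, MeasurableSet F → μ F = μ E →
      extRad μ E * perimeter μ E ≤ extRad μ F * perimeter μ F)
    (x₀ : M) (hencl : μ (E \ Metric.ball x₀ (extRad μ E).toReal) = 0) :
    ∀ F : Set M, MeasurableSet F → μ F = μ E →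
      IsCompact (closure ((F \ E) ∪ (E \ F))) →
      closure ((F \ E) ∪ (E \ F)) ⊆ Metric.ball x₀ (extRad μ E).toReal →
      perimeter μ E ≤ perimeter μ F := by
  intro F hFm hFvol _ hsub
  have hsymm : symmDiff F E ⊆ ball x₀ (extRad μ E).toReal := subset_closure.trans hsub
  by_cases h0 : extRad μ E = 0
  · have hFE : F = E := symmDiff_eq_bot.1 (subset_empty_iff.1 (by simpa [h0] using hsymm))
    rw [hFE]
  have hrad : extRad μ F ≤ extRad μ E :=
    extRad_le_of_diff_subset_ball hencl (subset_union_left.trans hsymm)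
  refine (ENNReal.mul_le_mul_iff_right h0 (extRad_ne_top_of_measure_diff_ball_eq_zero hencl)).1 ?_
  calc extRad μ E * perimeter μ E ≤ extRad μ F * perimeter μ F := hmin F hFm hFvol
    _ ≤ extRad μ E * perimeter μ F := mul_le_mul_left hrad _

/-- An isoperimetric-isodiametric set minimizes the perimeter among volume-preserving
compactly supported perturbations within its enclosing ball `B = B_{rad (E)}(x₀)`:
`P(E) ≤ P(F)` whenever `F Δ E ⊂⊂ B` and `μ(F) = μ(E)`. -/
theorem isoperimetric_isodiametric_set_is_constrained_minimizer {n : ℕ} {M : Type*}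
    [MetricSpace M] [MeasurableSpace M] [BorelSpace M]
    [ChartedSpace (EuclideanSpace ℝ (Fin n)) M]
    [IsManifold (𝓡 n) (⊤ : ℕ∞) M]
    (μ : Measure M) (E : Set M) (hEm : MeasurableSet E)
    (hmin : ∀ F : Set M, MeasurableSet F → μ F = μ E →
      extRad μ E * perimeter μ E ≤ extRad μ F * perimeter μ F)
    (x₀ : M) (hencl : μ (E \ Metric.ball x₀ (extRad μ E).toReal) = 0) :
    ∀ F : Set M, MeasurableSet F → μ F = μ E →
      IsCompact (closure ((F \ E) ∪ (E \ F))) →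
      closure ((F \ E) ∪ (E \ F)) ⊆ Metric.ball x₀ (extRad μ E).toReal →
      perimeter μ E ≤ perimeter μ F :=
  isoperimetric_isodiametric_set_is_constrained_minimizer_general μ E hmin x₀ hencl
end
end

section
/- Let Ω ⊂ ℝⁿ be open and u: Ω → ℝ a C¹ function. Suppose there exist C̄ > 0 and a countable cover of Ω by open balls B_i ⊂ Ω such that for all x, y ∈ B_i: |u(y) − u(x) − ∇u(x)·(y − x)| ≤ (C̄/2)|x − y|². Then the distributional second derivatives ∂²_{ij}u are represented by L^∞(Ω) functions with ‖∂²_{ij}u‖_{L^∞(Ω)} ≤ C̄. In particular u ∈ C^{1,1}_loc(Ω). -/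
open MeasureTheory Metric Set
open scoped ENNReal NNReal Topology
open Filter

noncomputable section

variable {n : ℕ}

set_option maxHeartbeats 1000000 in
theorem ibp_aux (Ω : Set (EuclideanSpace ℝ (Fin n))) (hΩ : IsOpen Ω)
    (v D ψ : EuclideanSpace ℝ (Fin n) → ℝ) (e : EuclideanSpace ℝ (Fin n))
    (hv : ContinuousOn v Ω)
    (hloc : ∀ x ∈ Ω, ∃ ε > 0, ∃ L : ℝ≥0, LipschitzOnWith L v (Metric.ball x ε))
    (hψ : ContDiff ℝ 1 ψ) (hψc : HasCompactSupport ψ) (hψΩ : tsupport ψ ⊆ Ω)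
    (hd : ∀ᵐ x, ψ x ≠ 0 → ∃ L : EuclideanSpace ℝ (Fin n) →L[ℝ] ℝ,
      HasFDerivAt v L x ∧ L e = D x) :
    ∫ x, v x * fderiv ℝ ψ x e = - ∫ x, D x * ψ x := by
  classical
  by_cases hKne : tsupport ψ = ∅
  · have hψ0 : ∀ x, ψ x = 0 := fun x =>
      image_eq_zero_of_notMem_tsupport (by simp [hKne])
    have hψfun : ψ = fun _ => (0:ℝ) := funext hψ0
    have h1 : ∀ x, fderiv ℝ ψ x = 0 := by
      intro x; rw [hψfun]; simp
    simp [h1, hψ0]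
  -- notation
  set K := tsupport ψ with hK
  have hKc : IsCompact K := hψc
  have hKΩ : K ⊆ Ω := hψΩ
  obtain ⟨δ, δpos, hδ⟩ := hKc.exists_cthickening_subset_open hΩ hKΩ
  -- uniform local Lipschitz bound near K
  have H : ∀ x : EuclideanSpace ℝ (Fin n), x ∈ K →
      ∃ ε > 0, ∃ L : ℝ≥0, LipschitzOnWith L v (Metric.ball x ε) := fun x hx => hloc x (hKΩ hx)
  choose! εf hεf Lf hLf using H
  obtain ⟨t, htK, htc⟩ := hKc.elim_nhds_subcover (fun x => Metric.ball x (εf x / 2))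
    (fun x hx => ball_mem_nhds x (by linarith [hεf x hx]))
  have htne : t.Nonempty := by
    rcases Set.nonempty_iff_ne_empty.2 hKne with ⟨x0, hx0⟩
    rcases Set.mem_iUnion₂.1 (htc hx0) with ⟨z, hz, _⟩
    exact ⟨z, hz⟩
  set ε₀ : ℝ := min (δ/2) (t.inf' htne (fun x => εf x / 2)) with hε₀
  have hε₀pos : 0 < ε₀ := by
    apply lt_min (by linarith)
    apply (Finset.lt_inf'_iff htne).2
    intro b hb; linarith [hεf b (htK b hb)]
  set Lv : ℝ≥0 := t.sup' htne Lf with hLv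
  have hunif : ∀ x ∈ K, ∀ y : EuclideanSpace ℝ (Fin n), dist y x < ε₀ →
      |v y - v x| ≤ (Lv : ℝ) * dist y x := by
    intro x hx y hy
    rcases Set.mem_iUnion₂.1 (htc hx) with ⟨z, hz, hxz⟩
    have hxz' : dist x z < εf z / 2 := mem_ball.1 hxz
    have h1 : x ∈ Metric.ball z (εf z) := by
      rw [mem_ball]; linarith [hεf z (htK z hz)]
    have h2 : y ∈ Metric.ball z (εf z) := by
      rw [mem_ball]
      have : dist y z ≤ dist y x + dist x z := dist_triangle y x z
      have hyε : dist y x < εf z / 2 := lt_of_lt_of_le hy (le_trans (min_le_right _ _)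
        (Finset.inf'_le _ hz))
      linarith
    have := (lipschitzOnWith_iff_dist_le_mul.1 (hLf z (htK z hz))) y h2 x h1
    have hLz : (Lf z : ℝ) ≤ (Lv : ℝ) := by
      exact_mod_cast Finset.le_sup' Lf hz
    calc |v y - v x| = dist (v y) (v x) := by rw [Real.dist_eq]
    _ ≤ (Lf z : ℝ) * dist y x := this
    _ ≤ (Lv : ℝ) * dist y x := by
        apply mul_le_mul_of_nonneg_right hLz dist_nonneg
  -- global Lipschitz constant for ψ
  obtain ⟨Cψ, hCψ⟩ := hψ.lipschitzWith_of_hasCompactSupport hψc one_ne_zero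
  -- bound for v on the cthickening
  obtain ⟨M0, hM0⟩ := (hKc.cthickening (r := δ)).exists_bound_of_continuousOn (hv.mono hδ)
  set M : ℝ := max M0 0 with hM
  have hMv : ∀ x ∈ cthickening δ K, |v x| ≤ M := fun x hx =>
    le_trans (hM0 x hx) (le_max_left _ _)
  -- the sequence of increments
  set τ : ℕ → ℝ := fun k => ε₀ / ((1 + ‖e‖) * (k + 1)) with hτ
  have hepos : (0:ℝ) < 1 + ‖e‖ := by positivity
  have hτpos : ∀ k, 0 < τ k := by intro k; positivity
  have hτe : ∀ k, τ k * ‖e‖ < ε₀ := by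
    intro k
    have hk1 : (1:ℝ) ≤ (k:ℝ) + 1 := by have : (0:ℝ) ≤ (k:ℝ) := Nat.cast_nonneg k; linarith
    rw [hτ, div_mul_eq_mul_div, div_lt_iff₀ (by positivity)]
    have h1 : ‖e‖ < (1 + ‖e‖) * ((k:ℝ) + 1) := by nlinarith [norm_nonneg e]
    nlinarith [hε₀pos]
  have hτδ : ∀ k, τ k * ‖e‖ ≤ δ / 2 := fun k =>
    le_trans (le_of_lt (hτe k)) (min_le_left _ _)
  have hτ0 : Tendsto τ atTop (𝓝[≠] (0:ℝ)) := by
    apply tendsto_nhdsWithin_of_tendsto_nhds_of_eventually_within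
    · have t1 : Tendsto (fun k : ℕ => (ε₀ / (1 + ‖e‖)) * (1 / ((k:ℝ) + 1))) atTop (𝓝 0) := by
        simpa using tendsto_one_div_add_atTop_nhds_zero_nat.const_mul (ε₀ / (1 + ‖e‖))
      have : τ = fun k : ℕ => (ε₀ / (1 + ‖e‖)) * (1 / ((k:ℝ) + 1)) := by
        funext k; rw [hτ]; field_simp
      rw [this]; exact t1
    · exact Eventually.of_forall fun k => (hτpos k).ne'
  -- continuity of the shifted products
  have contmul : ∀ a b : ℝ, |a| * ‖e‖ ≤ δ / 2 → |b| * ‖e‖ ≤ δ / 2 →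
      Continuous (fun x => v (x + a • e) * ψ (x + b • e)) := by
    intro a b ha hb
    rw [continuous_iff_continuousAt]
    intro x
    by_cases hx : x + b • e ∈ K
    · have hxΩ : x + a • e ∈ Ω := by
        apply hδ
        apply mem_of_mem_of_subset _ (closedBall_subset_cthickening hx δ)
        rw [mem_closedBall]
        have : x + a • e - (x + b • e) = (a - b) • e := by
          rw [sub_smul]; abel
        rw [dist_eq_norm, this, norm_smul]
        have : |a - b| ≤ |a| + |b| := abs_sub a b
        calc |a - b| * ‖e‖ ≤ (|a| + |b|) * ‖e‖ :=
              mul_le_mul_of_nonneg_right this (norm_nonneg e)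
        _ = |a| * ‖e‖ + |b| * ‖e‖ := by ring
        _ ≤ δ / 2 + δ / 2 := add_le_add ha hb
        _ = δ := by ring
      have c1 : ContinuousAt (fun y => v (y + a • e)) x := by
        apply ContinuousAt.comp _ (by fun_prop)
        exact hv.continuousAt (hΩ.mem_nhds hxΩ)
      exact c1.mul ((hψ.continuous.comp (by fun_prop)).continuousAt)
    · have hU : IsOpen {y : EuclideanSpace ℝ (Fin n) | y + b • e ∉ K} := by
        have : {y : EuclideanSpace ℝ (Fin n) | y + b • e ∉ K}
            = (fun y : EuclideanSpace ℝ (Fin n) => y + b • e) ⁻¹' Kᶜ := rfl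
        rw [this]
        exact (isClosed_tsupport ψ).isOpen_compl.preimage (by fun_prop)
      have hev : (fun y => v (y + a • e) * ψ (y + b • e)) =ᶠ[𝓝 x] fun _ => (0:ℝ) := by
        filter_upwards [hU.mem_nhds hx] with y hy
        simp [image_eq_zero_of_notMem_tsupport hy]
      exact ContinuousAt.congr continuousAt_const hev.symm
  have hcs : ∀ a b : ℝ, HasCompactSupport
      (fun x => v (x + a • e) * ψ (x + b • e)) := by
    intro a b
    have h1 : HasCompactSupport (fun x => ψ (x + b • e)) :=
      hψc.comp_homeomorph (Homeomorph.addRight (b • e))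
    exact h1.mul_left
  have hint : ∀ a b : ℝ, |a| * ‖e‖ ≤ δ / 2 → |b| * ‖e‖ ≤ δ / 2 →
      Integrable (fun x => v (x + a • e) * ψ (x + b • e)) :=
    fun a b ha hb => (contmul a b ha hb).integrable_of_hasCompactSupport (hcs a b)
  have habs0 : |(0:ℝ)| * ‖e‖ ≤ δ / 2 := by rw [abs_zero, zero_mul]; linarith
  have hτabs : ∀ k, |τ k| * ‖e‖ ≤ δ / 2 := by
    intro k; rw [abs_of_pos (hτpos k)]; exact hτδ k
  have hτabs' : ∀ k, |-(τ k)| * ‖e‖ ≤ δ / 2 := by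
    intro k; rw [abs_neg]; exact hτabs k
  have hint1 : Integrable (fun x => v x * ψ x) := by
    have := hint 0 0 habs0 habs0; simpa using this
  have hint2 : ∀ k, Integrable (fun x => v (x - τ k • e) * ψ x) := by
    intro k
    have := hint (-(τ k)) 0 (hτabs' k) habs0
    simpa [neg_smul, sub_eq_add_neg] using this
  have hint3 : ∀ k, Integrable (fun x => v x * ψ (x + τ k • e)) := by
    intro k
    have := hint 0 (τ k) habs0 (hτabs k)
    simpa using this
  -- translation identity
  have htrans : ∀ k, ∫ x, v x * ψ (x + τ k • e) = ∫ x, v (x - τ k • e) * ψ x := by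
    intro k
    have := MeasureTheory.integral_add_right_eq_self (μ := volume)
      (fun y => v (y - τ k • e) * ψ y) (τ k • e)
    rw [← this]
    congr 1
    funext x
    simp
  have hAB : ∀ k, (∫ x, v x * ((τ k)⁻¹ * (ψ (x + τ k • e) - ψ x)))
      = ∫ x, ((τ k)⁻¹ * (v (x - τ k • e) - v x)) * ψ x := by
    intro k
    have e1 : (fun x => v x * ((τ k)⁻¹ * (ψ (x + τ k • e) - ψ x)))
        = fun x => (τ k)⁻¹ • (v x * ψ (x + τ k • e) - v x * ψ x) := by
      funext x; simp only [smul_eq_mul]; ring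
    have e2 : (fun x => ((τ k)⁻¹ * (v (x - τ k • e) - v x)) * ψ x)
        = fun x => (τ k)⁻¹ • (v (x - τ k • e) * ψ x - v x * ψ x) := by
      funext x; simp only [smul_eq_mul]; ring
    rw [e1, e2, integral_smul, integral_smul,
      integral_sub (hint3 k) hint1, integral_sub (hint2 k) hint1, htrans k]
  -- continuity (hence measurability) of the difference-quotient integrands
  have contA : ∀ k, Continuous
      (fun x => v x * ((τ k)⁻¹ * (ψ (x + τ k • e) - ψ x))) := by
    intro k
    have h3 : Continuous (fun x => v x * ψ (x + τ k • e)) := by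
      have := contmul 0 (τ k) habs0 (hτabs k); simpa using this
    have h1 : Continuous (fun x => v x * ψ x) := by
      have := contmul 0 0 habs0 habs0; simpa using this
    apply Continuous.congr (((h3.sub h1).const_smul ((τ k)⁻¹)))
    intro x; simp only [Pi.smul_apply, Pi.sub_apply, smul_eq_mul]; ring
  have contB : ∀ k, Continuous
      (fun x => ((τ k)⁻¹ * (v (x - τ k • e) - v x)) * ψ x) := by
    intro k
    have h2 : Continuous (fun x => v (x - τ k • e) * ψ x) := by
      have := contmul (-(τ k)) 0 (hτabs' k) habs0
      simpa [neg_smul, sub_eq_add_neg] using this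
    have h1 : Continuous (fun x => v x * ψ x) := by
      have := contmul 0 0 habs0 habs0; simpa using this
    apply Continuous.congr (((h2.sub h1).const_smul ((τ k)⁻¹)))
    intro x; simp only [Pi.smul_apply, Pi.sub_apply, smul_eq_mul]; ring
  -- first dominated convergence
  have hDCT1 : Tendsto (fun k => ∫ x, v x * ((τ k)⁻¹ * (ψ (x + τ k • e) - ψ x))) atTop
      (𝓝 (∫ x, v x * fderiv ℝ ψ x e)) := by
    apply tendsto_integral_of_dominated_convergence
      ((cthickening δ K).indicator (fun _ => M * ((Cψ : ℝ) * ‖e‖)))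
    · exact fun k => (contA k).aestronglyMeasurable
    · rw [integrable_indicator_iff (isClosed_cthickening.measurableSet)]
      exact integrableOn_const (hKc.cthickening).measure_lt_top.ne
    · intro k
      apply Eventually.of_forall
      intro x
      by_cases hx : x ∈ cthickening δ K
      · rw [indicator_of_mem hx]
        have hψb : |ψ (x + τ k • e) - ψ x| ≤ (Cψ : ℝ) * (τ k * ‖e‖) := by
          have := hCψ.dist_le_mul (x + τ k • e) x
          rw [Real.dist_eq] at this
          have hd2 : dist (x + τ k • e) x = τ k * ‖e‖ := by
            rw [dist_eq_norm, add_sub_cancel_left, norm_smul,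
              Real.norm_eq_abs, abs_of_pos (hτpos k)]
          rw [hd2] at this
          exact this
        have hvb : |v x| ≤ M := hMv x hx
        have hτk := hτpos k
        rw [Real.norm_eq_abs, abs_mul, abs_mul, abs_inv, abs_of_pos hτk]
        calc |v x| * ((τ k)⁻¹ * |ψ (x + τ k • e) - ψ x|)
            ≤ M * ((τ k)⁻¹ * ((Cψ : ℝ) * (τ k * ‖e‖))) := by
              apply mul_le_mul hvb _ (by positivity) (le_trans (abs_nonneg _) hvb)
              exact mul_le_mul_of_nonneg_left hψb (by positivity)
        _ = M * ((Cψ : ℝ) * ‖e‖) := by field_simp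
      · rw [indicator_of_notMem hx]
        have h1 : ψ x = 0 :=
          image_eq_zero_of_notMem_tsupport (fun h => hx (self_subset_cthickening K h))
        have h2 : ψ (x + τ k • e) = 0 := by
          apply image_eq_zero_of_notMem_tsupport
          intro h
          apply hx
          apply mem_of_mem_of_subset _ (closedBall_subset_cthickening h δ)
          rw [mem_closedBall, dist_eq_norm]
          have : x - (x + τ k • e) = -(τ k • e) := by abel
          rw [this, norm_neg, norm_smul, Real.norm_eq_abs, abs_of_pos (hτpos k)]
          linarith [hτδ k]
        simp [h1, h2]
    · apply Eventually.of_forall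
      intro x
      have hψd : HasFDerivAt ψ (fderiv ℝ ψ x) x :=
        (hψ.differentiable one_ne_zero x).hasFDerivAt
      have hline : HasDerivAt (fun t : ℝ => ψ (x + t • e)) (fderiv ℝ ψ x e) 0 := by
        have h1 : HasDerivAt (fun t : ℝ => x + t • e) e 0 := by
          simpa using ((hasDerivAt_id (0:ℝ)).smul_const e).const_add x
        have h2 : HasFDerivAt ψ (fderiv ℝ ψ x) (x + (0:ℝ) • e) := by simpa using hψd
        exact h2.comp_hasDerivAt 0 h1
      have hslope := hline.tendsto_slope_zero.comp hτ0
      have : Tendsto (fun k => (τ k)⁻¹ * (ψ (x + τ k • e) - ψ x)) atTop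
          (𝓝 (fderiv ℝ ψ x e)) := by
        have heq : (fun k => (τ k)⁻¹ * (ψ (x + τ k • e) - ψ x))
            = fun k => (τ k)⁻¹ • (ψ (x + (0 + τ k) • e) - ψ (x + (0:ℝ) • e)) := by
          funext k; simp [smul_eq_mul]
        rw [heq]; exact hslope
      exact this.const_mul (v x)
  -- second dominated convergence
  have hDCT2 : Tendsto (fun k => ∫ x, ((τ k)⁻¹ * (v (x - τ k • e) - v x)) * ψ x) atTop
      (𝓝 (∫ x, -D x * ψ x)) := by
    apply tendsto_integral_of_dominated_convergence
      (fun x => ((Lv : ℝ) * ‖e‖) * |ψ x|)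
    · exact fun k => (contB k).aestronglyMeasurable
    · apply Continuous.integrable_of_hasCompactSupport
      · exact continuous_const.mul (hψ.continuous.abs)
      · exact (hψc.abs).mul_left
    · intro k
      apply Eventually.of_forall
      intro x
      by_cases hψx : ψ x = 0
      · rw [Real.norm_eq_abs, hψx, mul_zero, abs_zero]; positivity
      · have hxK : x ∈ K := subset_tsupport ψ (by simpa [Function.mem_support] using hψx)
        have hdist : dist (x - τ k • e) x = τ k * ‖e‖ := by
          rw [dist_eq_norm, sub_sub_cancel_left, norm_neg, norm_smul,
            Real.norm_eq_abs, abs_of_pos (hτpos k)]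
        have hvb : |v (x - τ k • e) - v x| ≤ (Lv : ℝ) * (τ k * ‖e‖) := by
          have := hunif x hxK (x - τ k • e) (by rw [hdist]; exact hτe k)
          rwa [hdist] at this
        rw [Real.norm_eq_abs, abs_mul, abs_mul, abs_inv, abs_of_pos (hτpos k)]
        apply mul_le_mul_of_nonneg_right _ (abs_nonneg (ψ x))
        calc (τ k)⁻¹ * |v (x - τ k • e) - v x|
            ≤ (τ k)⁻¹ * ((Lv : ℝ) * (τ k * ‖e‖)) :=
              mul_le_mul_of_nonneg_left hvb (by positivity)
        _ = (Lv : ℝ) * ‖e‖ := by rw [mul_left_comm (Lv : ℝ), inv_mul_cancel_left₀ (hτpos k).ne']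
    · filter_upwards [hd] with x hx
      by_cases hψx : ψ x = 0
      · have : (fun k => ((τ k)⁻¹ * (v (x - τ k • e) - v x)) * ψ x) = fun _ => (0:ℝ) := by
          funext k; rw [hψx, mul_zero]
        rw [this, hψx, mul_zero]
        exact tendsto_const_nhds
      · obtain ⟨L, hL, hLe⟩ := hx hψx
        have hline : HasDerivAt (fun t : ℝ => v (x + t • (-e))) (L (-e)) 0 := by
          have h1 : HasDerivAt (fun t : ℝ => x + t • (-e)) (-e) 0 := by
            simpa using ((hasDerivAt_id (0:ℝ)).smul_const (-e)).const_add x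
          have h2 : HasFDerivAt v L (x + (0:ℝ) • (-e)) := by simpa using hL
          exact h2.comp_hasDerivAt 0 h1
        have hslope := hline.tendsto_slope_zero.comp hτ0
        have hmain : Tendsto (fun k => (τ k)⁻¹ * (v (x - τ k • e) - v x)) atTop
            (𝓝 (-D x)) := by
          have heq : (fun k => (τ k)⁻¹ * (v (x - τ k • e) - v x))
              = fun k => (τ k)⁻¹ • (v (x + (0 + τ k) • (-e)) - v (x + (0:ℝ) • (-e))) := by
            funext k; simp [smul_eq_mul, sub_eq_add_neg, smul_neg]
          have hLe' : L (-e) = -D x := by rw [map_neg, hLe]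
          rw [heq]
          rw [← hLe']
          exact hslope
        exact hmain.mul_const (ψ x)
  have h2 : Tendsto (fun k => ∫ x, v x * ((τ k)⁻¹ * (ψ (x + τ k • e) - ψ x))) atTop
      (𝓝 (∫ x, -D x * ψ x)) := by
    have : (fun k => ∫ x, v x * ((τ k)⁻¹ * (ψ (x + τ k • e) - ψ x)))
        = fun k => ∫ x, ((τ k)⁻¹ * (v (x - τ k • e) - v x)) * ψ x := funext hAB
    rw [this]; exact hDCT2
  have hfinal := tendsto_nhds_unique hDCT1 h2
  rw [hfinal, ← integral_neg]
  congr 1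
  funext x
  ring


set_option maxHeartbeats 1600000 in
/-- If a `C¹` function `u` on an open set `Ω ⊆ ℝⁿ` deviates from its first-order Taylor
expansion at most quadratically, with a uniform constant `C̄`, on the balls of a countable
cover of `Ω`, then its distributional second derivatives `∂²_{ij} u` are represented by
`L^∞(Ω)` functions bounded by `C̄`; in particular `u` is locally `C^{1,1}` on `Ω`. -/
theorem c11_of_uniform_quadratic_taylor_bound
    (Ω : Set (EuclideanSpace ℝ (Fin n))) (hΩ : IsOpen Ω)
    (u : EuclideanSpace ℝ (Fin n) → ℝ) (hu : ContDiffOn ℝ 1 u Ω)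
    (Cb : ℝ) (hCb : 0 < Cb)
    (c : ℕ → EuclideanSpace ℝ (Fin n)) (ρ : ℕ → ℝ)
    (hsub : ∀ i, Metric.ball (c i) (ρ i) ⊆ Ω)
    (hcover : Ω ⊆ ⋃ i, Metric.ball (c i) (ρ i))
    (hquad : ∀ i, ∀ x ∈ Metric.ball (c i) (ρ i), ∀ y ∈ Metric.ball (c i) (ρ i),
      |u y - u x - fderivWithin ℝ u Ω x (y - x)| ≤ Cb / 2 * ‖y - x‖ ^ 2) :
    (∃ g : Fin n → Fin n → EuclideanSpace ℝ (Fin n) → ℝ,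
      (∀ i j, Measurable (g i j)) ∧ (∀ i j x, |g i j x| ≤ Cb) ∧
      ∀ (i j : Fin n) (φ : EuclideanSpace ℝ (Fin n) → ℝ),
        ContDiff ℝ (⊤ : ℕ∞) φ → HasCompactSupport φ → tsupport φ ⊆ Ω →
        ∫ x in Ω, u x *
            fderiv ℝ (fun y => fderiv ℝ φ y (EuclideanSpace.single j 1)) x
              (EuclideanSpace.single i 1) =
          ∫ x in Ω, g i j x * φ x) ∧
    (∀ x ∈ Ω, ∃ ε : ℝ, 0 < ε ∧ ∃ K : ℝ≥0,
      LipschitzOnWith K (fun y => fderivWithin ℝ u Ω y) (Metric.ball x ε)) := by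
  classical
  set F : EuclideanSpace ℝ (Fin n) → (EuclideanSpace ℝ (Fin n) →L[ℝ] ℝ) :=
    fun y => fderiv ℝ u y with hF
  have hFW : ∀ x ∈ Ω, fderivWithin ℝ u Ω x = F x := fun x hx =>
    fderivWithin_of_isOpen hΩ hx
  have hdiff : ∀ x ∈ Ω, DifferentiableAt ℝ u x := fun x hx =>
    ((hu.differentiableOn one_ne_zero) x hx).differentiableAt (hΩ.mem_nhds hx)
  have hFd : ∀ x ∈ Ω, HasFDerivAt u (F x) x := fun x hx => (hdiff x hx).hasFDerivAt
  have hquad' : ∀ m, ∀ x ∈ Metric.ball (c m) (ρ m), ∀ y ∈ Metric.ball (c m) (ρ m),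
      |u y - u x - F x (y - x)| ≤ Cb / 2 * ‖y - x‖ ^ 2 := by
    intro m x hx y hy
    have := hquad m x hx y hy
    rwa [hFW x (hsub m hx)] at this
  -- local Lipschitz property of F
  have hlip : ∀ x ∈ Ω, ∃ ε > 0, Metric.ball x ε ⊆ Ω ∧
      LipschitzOnWith (Real.toNNReal (3 * Cb)) F (Metric.ball x ε) := by
    intro x hxΩ
    obtain ⟨m, hm⟩ := Set.mem_iUnion.1 (hcover hxΩ)
    set r : ℝ := ρ m - dist x (c m) with hr
    have hrpos : 0 < r := sub_pos.2 (mem_ball.1 hm)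
    have hball : ∀ z : EuclideanSpace ℝ (Fin n), dist z x < 3 * (r / 4) →
        z ∈ Metric.ball (c m) (ρ m) := by
      intro z hz
      rw [mem_ball]
      have h1 := dist_triangle z x (c m)
      have h2 : dist x (c m) = ρ m - r := by rw [hr]; ring
      linarith
    refine ⟨r / 4, by positivity, ?_, ?_⟩
    · intro y hy
      exact hsub m (hball y (lt_trans (mem_ball.1 hy) (by linarith)))
    · rw [lipschitzOnWith_iff_dist_le_mul]
      intro p hp q hq
      rw [Real.coe_toNNReal _ (by positivity)]
      have hpB : p ∈ Metric.ball (c m) (ρ m) :=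
        hball p (lt_trans (mem_ball.1 hp) (by linarith))
      have hqB : q ∈ Metric.ball (c m) (ρ m) :=
        hball q (lt_trans (mem_ball.1 hq) (by linarith))
      by_cases hpq0 : p = q
      · simp [hpq0]
      rw [dist_eq_norm]
      apply ContinuousLinearMap.opNorm_le_bound _ (by positivity)
      intro w
      by_cases hw : w = 0
      · simp [hw]
      have hwpos : 0 < ‖w‖ := norm_pos_iff.2 hw
      set a : ℝ := ‖p - q‖ with hadef
      have hapos : 0 < a := by
        rw [hadef]; exact norm_pos_iff.2 (sub_ne_zero.2 hpq0)
      have haq : a < 2 * (r / 4) := by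
        rw [hadef, ← dist_eq_norm]
        have := dist_triangle p x q
        rw [dist_comm x q] at this
        linarith [mem_ball.1 hp, mem_ball.1 hq]
      set s : ℝ := a / ‖w‖ with hsdef
      have hspos : 0 < s := by positivity
      set z := q + s • w with hzdef
      have hzq : z - q = s • w := by rw [hzdef]; abel
      have hzqn : ‖z - q‖ = a := by
        rw [hzq, norm_smul, Real.norm_eq_abs, abs_of_pos hspos, hsdef]
        field_simp
      have hzB : z ∈ Metric.ball (c m) (ρ m) := by
        apply hball
        calc dist z x ≤ dist z q + dist q x := dist_triangle z q x
        _ = a + dist q x := by rw [dist_eq_norm, hzqn]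
        _ < 2 * (r / 4) + r / 4 := by
            have := mem_ball.1 hq
            linarith
        _ = 3 * (r / 4) := by ring
      have hA := hquad' m p hpB z hzB
      have hB := hquad' m q hqB z hzB
      have hE := hquad' m p hpB q hqB
      have key : (F q - F p) (z - q)
          = (u z - u p - F p (z - p)) - (u z - u q - F q (z - q))
            - (u q - u p - F p (q - p)) := by
        simp only [ContinuousLinearMap.sub_apply, map_sub]
        ring
      have hzp : ‖z - p‖ ≤ 2 * a := by
        calc ‖z - p‖ = ‖(z - q) + (q - p)‖ := by abel_nf
        _ ≤ ‖z - q‖ + ‖q - p‖ := norm_add_le _ _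
        _ = a + a := by rw [hzqn, norm_sub_rev, ← hadef]
        _ = 2 * a := by ring
      have hA' : |u z - u p - F p (z - p)| ≤ Cb / 2 * (2 * a) ^ 2 := by
        apply le_trans hA
        apply mul_le_mul_of_nonneg_left _ (by positivity)
        exact pow_le_pow_left₀ (norm_nonneg _) hzp 2
      have hB' : |u z - u q - F q (z - q)| ≤ Cb / 2 * a ^ 2 := by rwa [hzqn] at hB
      have hE' : |u q - u p - F p (q - p)| ≤ Cb / 2 * a ^ 2 := by
        rwa [norm_sub_rev, ← hadef] at hE
      have h3 : |(F q - F p) (z - q)| ≤ 3 * Cb * a ^ 2 := by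
        rw [key]
        calc |(u z - u p - F p (z - p)) - (u z - u q - F q (z - q))
              - (u q - u p - F p (q - p))|
            ≤ |(u z - u p - F p (z - p)) - (u z - u q - F q (z - q))|
              + |u q - u p - F p (q - p)| := abs_sub _ _
        _ ≤ |u z - u p - F p (z - p)| + |u z - u q - F q (z - q)|
              + |u q - u p - F p (q - p)| := by
            have := abs_sub (u z - u p - F p (z - p)) (u z - u q - F q (z - q))
            linarith
        _ ≤ Cb / 2 * (2 * a) ^ 2 + Cb / 2 * a ^ 2 + Cb / 2 * a ^ 2 := by
            linarith
        _ = 3 * Cb * a ^ 2 := by ring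
      have h4 : (F q - F p) (z - q) = s * ((F q - F p) w) := by
        rw [hzq]; simp
      have h5 : s * |(F q - F p) w| ≤ 3 * Cb * a ^ 2 := by
        rw [← abs_of_pos hspos, ← abs_mul, ← h4]
        exact h3
      have h6 : s * ‖w‖ = a := by rw [hsdef]; field_simp
      have h7 : |(F q - F p) w| ≤ 3 * Cb * a * ‖w‖ := by
        nlinarith [abs_nonneg ((F q - F p) w)]
      calc ‖(F p - F q) w‖ = |(F q - F p) w| := by
            rw [Real.norm_eq_abs, ContinuousLinearMap.sub_apply,
              ContinuousLinearMap.sub_apply, abs_sub_comm]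
      _ ≤ 3 * Cb * a * ‖w‖ := h7
      _ = 3 * Cb * dist p q * ‖w‖ := by rw [dist_eq_norm, ← hadef]
  -- a.e. differentiability of F on Ω
  have hae : ∀ᵐ x, x ∈ Ω → DifferentiableAt ℝ F x := by
    rw [ae_iff]
    have hset : {x | ¬ (x ∈ Ω → DifferentiableAt ℝ F x)}
        = {x | x ∈ Ω ∧ ¬ DifferentiableAt ℝ F x} := by
      ext x; simp [Classical.not_imp]
    rw [hset]
    apply measure_null_of_locally_null
    intro x hx
    obtain ⟨ε, εpos, hsubΩ, hlipF⟩ := hlip x hx.1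
    refine ⟨{y | y ∈ Ω ∧ ¬ DifferentiableAt ℝ F y} ∩ Metric.ball x ε,
      inter_mem_nhdsWithin _ (Metric.ball_mem_nhds x εpos), ?_⟩
    have hRad := hlipF.ae_differentiableWithinAt_of_mem (μ := volume)
    apply measure_mono_null _ (ae_iff.1 hRad)
    intro y ⟨hy1, hy2⟩
    intro hcon
    exact hy1.2 ((hcon hy2).differentiableAt (Metric.isOpen_ball.mem_nhds hy2))
  -- symmetry and quadratic-form bound of the second derivative
  have hsb : ∀ x ∈ Ω, DifferentiableAt ℝ F x →
      (∀ vv ww, fderiv ℝ F x vv ww = fderiv ℝ F x ww vv) ∧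
      (∀ vv : EuclideanSpace ℝ (Fin n), |fderiv ℝ F x vv vv| ≤ Cb * ‖vv‖ ^ 2) := by
    intro x hx hdx
    constructor
    · intro vv ww
      apply second_derivative_symmetric_of_eventually (f := u) (f' := F) (x := x)
      · filter_upwards [hΩ.mem_nhds hx] with y hy
        exact hFd y hy
      · exact hdx.hasFDerivAt
    · intro vv
      by_cases hv0 : vv = 0
      · simp [hv0]
      have hvpos : 0 < ‖vv‖ := norm_pos_iff.2 hv0
      obtain ⟨m, hm⟩ := Set.mem_iUnion.1 (hcover hx)
      set r : ℝ := ρ m - dist x (c m) with hr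
      have hrpos : 0 < r := sub_pos.2 (mem_ball.1 hm)
      set τ : ℕ → ℝ := fun k => r / ((1 + ‖vv‖) * (k + 1)) with hτ
      have hτpos : ∀ k, 0 < τ k := by
        intro k; rw [hτ]; positivity
      have hτv : ∀ k, τ k * ‖vv‖ < r := by
        intro k
        have hk1 : (1:ℝ) ≤ (k:ℝ) + 1 := by
          have : (0:ℝ) ≤ (k:ℝ) := Nat.cast_nonneg k
          linarith
        rw [hτ, div_mul_eq_mul_div, div_lt_iff₀ (by positivity)]
        have h5 : (1:ℝ) + ‖vv‖ ≤ (1 + ‖vv‖) * ((k:ℝ) + 1) :=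
          le_mul_of_one_le_right (by positivity) hk1
        nlinarith [hrpos, norm_nonneg vv]
      have hτ0 : Tendsto τ atTop (𝓝[≠] (0:ℝ)) := by
        apply tendsto_nhdsWithin_of_tendsto_nhds_of_eventually_within
        · have t1 : Tendsto (fun k : ℕ => (r / (1 + ‖vv‖)) * (1 / ((k:ℝ) + 1))) atTop
              (𝓝 0) := by
            simpa using tendsto_one_div_add_atTop_nhds_zero_nat.const_mul (r / (1 + ‖vv‖))
          have : τ = fun k : ℕ => (r / (1 + ‖vv‖)) * (1 / ((k:ℝ) + 1)) := by
            funext k; rw [hτ]; field_simp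
          rw [this]; exact t1
        · exact Filter.Eventually.of_forall fun k => (hτpos k).ne'
      have hmem : ∀ k, x + τ k • vv ∈ Metric.ball (c m) (ρ m) := by
        intro k
        rw [mem_ball]
        have h1 : dist (x + τ k • vv) (c m) ≤ dist (x + τ k • vv) x + dist x (c m) :=
          dist_triangle _ _ _
        have h2 : dist (x + τ k • vv) x = τ k * ‖vv‖ := by
          rw [dist_eq_norm, add_sub_cancel_left, norm_smul, Real.norm_eq_abs,
            abs_of_pos (hτpos k)]
        have h3 : dist x (c m) = ρ m - r := by rw [hr]; ring
        rw [h2] at h1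
        rw [h3] at h1
        linarith [hτv k]
      have hdouble : ∀ k, |F (x + τ k • vv) vv - F x vv| ≤ Cb * τ k * ‖vv‖ ^ 2 := by
        intro k
        have h1 := hquad' m x hm (x + τ k • vv) (hmem k)
        have h2 := hquad' m (x + τ k • vv) (hmem k) x hm
        have e1 : (x + τ k • vv) - x = τ k • vv := add_sub_cancel_left x _
        have e2 : x - (x + τ k • vv) = -(τ k • vv) := by abel
        rw [e1] at h1
        rw [e2] at h2
        have key : F (x + τ k • vv) (τ k • vv) - F x (τ k • vv)
            = (u (x + τ k • vv) - u x - F x (τ k • vv))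
              + (u x - u (x + τ k • vv) - F (x + τ k • vv) (-(τ k • vv))) := by
          rw [map_neg]; ring
        have habs : |F (x + τ k • vv) (τ k • vv) - F x (τ k • vv)|
            ≤ Cb * ‖τ k • vv‖ ^ 2 := by
          rw [key]
          have := abs_add_le (u (x + τ k • vv) - u x - F x (τ k • vv))
            (u x - u (x + τ k • vv) - F (x + τ k • vv) (-(τ k • vv)))
          rw [norm_neg] at h2
          linarith
        have hsm : ∀ G : EuclideanSpace ℝ (Fin n) →L[ℝ] ℝ,
            G (τ k • vv) = τ k * G vv := by
          intro G; simp
        rw [hsm, hsm] at habs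
        have hnorm : ‖τ k • vv‖ ^ 2 = τ k ^ 2 * ‖vv‖ ^ 2 := by
          rw [norm_smul, Real.norm_eq_abs, abs_of_pos (hτpos k)]; ring
        rw [hnorm, ← mul_sub, abs_mul, abs_of_pos (hτpos k)] at habs
        have := (mul_le_mul_iff_right₀ (hτpos k)).1 (by
          calc τ k * |F (x + τ k • vv) vv - F x vv| ≤ Cb * (τ k ^ 2 * ‖vv‖ ^ 2) := habs
          _ = τ k * (Cb * τ k * ‖vv‖ ^ 2) := by ring)
        exact this
      have hline : HasDerivAt (fun t : ℝ => F (x + t • vv) vv)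
          (fderiv ℝ F x vv vv) 0 := by
        have h1 : HasDerivAt (fun t : ℝ => x + t • vv) vv 0 := by
          simpa using ((hasDerivAt_id (0:ℝ)).smul_const vv).const_add x
        have h2 : HasFDerivAt F (fderiv ℝ F x) (x + (0:ℝ) • vv) := by
          simpa using hdx.hasFDerivAt
        have h3 : HasDerivAt (fun t : ℝ => F (x + t • vv)) (fderiv ℝ F x vv) 0 :=
          h2.comp_hasDerivAt 0 h1
        have h4 := (ContinuousLinearMap.apply ℝ ℝ vv).hasFDerivAt.comp_hasDerivAt 0 h3
        exact h4
      have hslope := hline.tendsto_slope_zero.comp hτ0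
      have hmain : Tendsto (fun k => (τ k)⁻¹ * (F (x + τ k • vv) vv - F x vv)) atTop
          (𝓝 (fderiv ℝ F x vv vv)) := by
        have heq : (fun k => (τ k)⁻¹ * (F (x + τ k • vv) vv - F x vv))
            = fun k => (τ k)⁻¹ • (F (x + (0 + τ k) • vv) vv - F (x + (0:ℝ) • vv) vv) := by
          funext k; simp [smul_eq_mul]
        rw [heq]
        exact hslope
      have hbound : ∀ k, |(τ k)⁻¹ * (F (x + τ k • vv) vv - F x vv)| ≤ Cb * ‖vv‖ ^ 2 := by
        intro k
        rw [abs_mul, abs_inv, abs_of_pos (hτpos k)]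
        calc (τ k)⁻¹ * |F (x + τ k • vv) vv - F x vv|
            ≤ (τ k)⁻¹ * (Cb * τ k * ‖vv‖ ^ 2) :=
              mul_le_mul_of_nonneg_left (hdouble k) (by positivity)
        _ = Cb * ‖vv‖ ^ 2 := by rw [mul_comm Cb (τ k), mul_assoc, inv_mul_cancel_left₀ (hτpos k).ne']
      exact le_of_tendsto hmain.abs (Filter.Eventually.of_forall hbound)
  -- bound on mixed second derivatives at good points
  have hij : ∀ x ∈ Ω, ∀ hdx : DifferentiableAt ℝ F x, ∀ i j : Fin n,
      |fderiv ℝ F x (EuclideanSpace.single i (1:ℝ)) (EuclideanSpace.single j (1:ℝ))| ≤ Cb := by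
    intro x hx hdx i j
    obtain ⟨hsymm, hbound⟩ := hsb x hx hdx
    set a : EuclideanSpace ℝ (Fin n) := EuclideanSpace.single i (1:ℝ) with ha
    set b : EuclideanSpace ℝ (Fin n) := EuclideanSpace.single j (1:ℝ) with hb
    have hna : ‖a‖ = 1 := by rw [ha, EuclideanSpace.norm_single]; norm_num
    have hnb : ‖b‖ = 1 := by rw [hb, EuclideanSpace.norm_single]; norm_num
    by_cases hijeq : i = j
    · subst hijeq
      have hba : b = a := by rw [ha, hb]
      have := hbound a
      rw [hna] at this
      rw [hba]
      simpa using this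
    · have hab : inner ℝ a b = (0:ℝ) := by
        rw [ha, hb, EuclideanSpace.inner_single_left]
        simp [EuclideanSpace.single_apply, hijeq]
      have hnab : ‖a + b‖ ^ 2 = 2 := by
        rw [norm_add_sq_real, hab, hna, hnb]; ring
      have hnab' : ‖a - b‖ ^ 2 = 2 := by
        rw [norm_sub_sq_real, hab, hna, hnb]; ring
      have h1 := hbound (a + b)
      have h2 := hbound (a - b)
      rw [hnab] at h1
      rw [hnab'] at h2
      have e1 : fderiv ℝ F x (a + b) (a + b)
          = fderiv ℝ F x a a + 2 * fderiv ℝ F x a b + fderiv ℝ F x b b := by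
        rw [map_add]
        simp only [ContinuousLinearMap.add_apply, map_add]
        rw [hsymm b a]; ring
      have e2 : fderiv ℝ F x (a - b) (a - b)
          = fderiv ℝ F x a a - 2 * fderiv ℝ F x a b + fderiv ℝ F x b b := by
        rw [map_sub]
        simp only [ContinuousLinearMap.sub_apply, map_sub]
        rw [hsymm b a]; ring
      rw [abs_le] at h1 h2 ⊢
      constructor
      · nlinarith [h1.1, h2.2]
      · nlinarith [h1.2, h2.1]
  -- the candidate second derivatives
  set A : Set (EuclideanSpace ℝ (Fin n)) := {x | x ∈ Ω ∧ DifferentiableAt ℝ F x} with hA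
  have hAmeas : MeasurableSet A :=
    hΩ.measurableSet.inter (measurableSet_of_differentiableAt ℝ F)
  set g : Fin n → Fin n → EuclideanSpace ℝ (Fin n) → ℝ := fun i j =>
    A.indicator (fun x => fderiv ℝ F x (EuclideanSpace.single i (1:ℝ))
      (EuclideanSpace.single j (1:ℝ))) with hg
  have hFcont : ContinuousOn F Ω := by
    have h1 : ContinuousOn (fderivWithin ℝ u Ω) Ω :=
      hu.continuousOn_fderivWithin hΩ.uniqueDiffOn le_rfl
    exact h1.congr fun x hx => (hFW x hx).symm ▸ rfl
  refine ⟨⟨g, ?_, ?_, ?_⟩, ?_⟩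
  · intro i j
    apply Measurable.indicator _ hAmeas
    exact ((ContinuousLinearMap.apply ℝ ℝ
      (EuclideanSpace.single j (1:ℝ))).continuous.measurable).comp
      (measurable_fderiv_apply_const ℝ F (EuclideanSpace.single i (1:ℝ)))
  · intro i j x
    by_cases hx : x ∈ A
    · rw [hg]
      simp only [Set.indicator_of_mem hx]
      exact hij x hx.1 hx.2 i j
    · rw [hg]
      simp only [Set.indicator_of_notMem hx]
      simpa using le_of_lt hCb
  · intro i j φ hφ hφc hφΩ
    set ei : EuclideanSpace ℝ (Fin n) := EuclideanSpace.single i (1:ℝ) with hei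
    set ej : EuclideanSpace ℝ (Fin n) := EuclideanSpace.single j (1:ℝ) with hej
    have hψA1 : ContDiff ℝ 1 (fun y => fderiv ℝ φ y ej) :=
      ((hφ.fderiv_right (m := 1) (by exact WithTop.coe_le_coe.2 le_top)).clm_apply contDiff_const).of_le le_rfl
    have hψAc : HasCompactSupport (fun y => fderiv ℝ φ y ej) :=
      hφc.fderiv_apply ℝ ej
    have hψAt : tsupport (fun y => fderiv ℝ φ y ej) ⊆ Ω := by
      apply Set.Subset.trans _ hφΩ
      apply Set.Subset.trans _ (tsupport_fderiv_subset ℝ (f := φ))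
      apply closure_mono
      intro y hy
      simp only [Function.mem_support] at hy ⊢
      intro h0
      exact hy (by rw [h0]; rfl)
    have hlocu : ∀ x ∈ Ω, ∃ ε > 0, ∃ L : ℝ≥0, LipschitzOnWith L u (Metric.ball x ε) := by
      intro x hx
      obtain ⟨K0, t, ht, hK0⟩ := (hu.contDiffAt (hΩ.mem_nhds hx)).exists_lipschitzOnWith
      obtain ⟨ε, εpos, hballt⟩ := Metric.mem_nhds_iff.1 ht
      exact ⟨ε, εpos, K0, hK0.mono hballt⟩
    have stepA : ∫ x, u x * fderiv ℝ (fun y => fderiv ℝ φ y ej) x ei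
        = - ∫ x, F x ei * fderiv ℝ φ x ej := by
      have h := ibp_aux Ω hΩ u (fun x => F x ei) (fun y => fderiv ℝ φ y ej) ei
        hu.continuousOn hlocu hψA1 hψAc hψAt ?_
      · exact h
      · apply Filter.Eventually.of_forall
        intro x hψx
        have hxΩ : x ∈ Ω := hψAt (subset_tsupport _ (Function.mem_support.2 hψx))
        exact ⟨F x, hFd x hxΩ, rfl⟩
    have stepB : ∫ x, F x ei * fderiv ℝ φ x ej = - ∫ x, g i j x * φ x := by
      have h := ibp_aux Ω hΩ (fun x => F x ei) (g i j) φ ej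
        (hFcont.clm_apply continuousOn_const) ?_ (hφ.of_le (by simp)) hφc hφΩ ?_
      · exact h
      · intro x hx
        obtain ⟨ε, εpos, hsubΩ, hlipF⟩ := hlip x hx
        exact ⟨ε, εpos, _, (ContinuousLinearMap.apply ℝ ℝ ei).lipschitz.comp_lipschitzOnWith hlipF⟩
      · filter_upwards [hae] with x hx hφx
        have hxΩ : x ∈ Ω := hφΩ (subset_tsupport _ (Function.mem_support.2 hφx))
        have hdx := hx hxΩ
        refine ⟨(ContinuousLinearMap.apply ℝ ℝ ei).comp (fderiv ℝ F x), ?_, ?_⟩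
        · exact (ContinuousLinearMap.apply ℝ ℝ ei).hasFDerivAt.comp x hdx.hasFDerivAt
        · have hsymm := (hsb x hxΩ hdx).1 ej ei
          rw [ContinuousLinearMap.comp_apply]
          rw [ContinuousLinearMap.apply_apply]
          rw [hsymm]
          exact (Set.indicator_of_mem (show x ∈ A from ⟨hxΩ, hdx⟩) (fun y => fderiv ℝ F y (EuclideanSpace.single i (1:ℝ)) (EuclideanSpace.single j (1:ℝ)))).symm
    have hLHS : ∫ x in Ω, u x * fderiv ℝ (fun y => fderiv ℝ φ y ej) x ei
        = ∫ x, u x * fderiv ℝ (fun y => fderiv ℝ φ y ej) x ei := by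
      apply setIntegral_eq_integral_of_forall_compl_eq_zero
      intro x hx
      have hx' : x ∉ tsupport (fun y => fderiv ℝ φ y ej) := fun h => hx (hψAt h)
      have hev := notMem_tsupport_iff_eventuallyEq.1 hx'
      have : fderiv ℝ (fun y => fderiv ℝ φ y ej) x = 0 := by
        rw [hev.fderiv_eq]
        exact fderiv_const_apply 0
      rw [this]
      simp
    have hRHS : ∫ x in Ω, g i j x * φ x = ∫ x, g i j x * φ x := by
      apply setIntegral_eq_integral_of_forall_compl_eq_zero
      intro x hx
      rw [image_eq_zero_of_notMem_tsupport (fun h => hx (hφΩ h)), mul_zero]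
    rw [hLHS, hRHS, stepA, stepB, neg_neg]
  · intro x hx
    obtain ⟨ε, εpos, hsubΩ, hlipF⟩ := hlip x hx
    refine ⟨ε, εpos, Real.toNNReal (3 * Cb), ?_⟩
    intro p hp q hq
    have h1 : fderivWithin ℝ u Ω p = F p := hFW p (hsubΩ hp)
    have h2 : fderivWithin ℝ u Ω q = F q := hFW q (hsubΩ hq)
    show edist (fderivWithin ℝ u Ω p) (fderivWithin ℝ u Ω q) ≤ _
    rw [h1, h2]
    exact hlipF hp hq
end
end

section
/- Let Ω ⊂ ℝⁿ be open and u ∈ C¹(Ω) satisfy |(∇u(x) − ∇u(y))·(x − y)| ≤ C̄|x − y|² for all x, y in a ball B ⊂ Ω. Then for every unit vector v ∈ ℝⁿ and every φ ∈ C_c^∞(B): |∫_B u · ∂²φ/∂v² dx| ≤ C̄ ‖φ‖_{L¹(B)}. -/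
open MeasureTheory Metric Set
open scoped ENNReal Topology
open scoped Manifold

noncomputable section

variable {n : ℕ}

/-- If `u ∈ C¹(Ω)` satisfies `|(∇u(x) − ∇u(y))·(x − y)| ≤ C̄ |x − y|²` on an open ball
`B ⊆ Ω`, then for every unit vector `v` and every test function `φ ∈ C_c^∞(B)` one has
`|∫_B u ∂²φ/∂v²| ≤ C̄ ‖φ‖_{L¹(B)}`. -/
theorem second_directional_derivative_bound
    (Ω : Set (EuclideanSpace ℝ (Fin n))) (hΩ : IsOpen Ω)
    (u : EuclideanSpace ℝ (Fin n) → ℝ) (hu : ContDiffOn ℝ 1 u Ω)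
    (c : EuclideanSpace ℝ (Fin n)) (ρ : ℝ) (hρ : 0 < ρ)
    (hsub : Metric.ball c ρ ⊆ Ω) (Cb : ℝ) (hCb : 0 < Cb)
    (hgrad : ∀ x ∈ Metric.ball c ρ, ∀ y ∈ Metric.ball c ρ,
      |fderivWithin ℝ u Ω x (x - y) - fderivWithin ℝ u Ω y (x - y)| ≤ Cb * ‖x - y‖ ^ 2) :
    ∀ v : EuclideanSpace ℝ (Fin n), ‖v‖ = 1 →
      ∀ φ : EuclideanSpace ℝ (Fin n) → ℝ,
        ContDiff ℝ (⊤ : ℕ∞) φ → HasCompactSupport φ → tsupport φ ⊆ Metric.ball c ρ →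
        |∫ x in Metric.ball c ρ, u x * fderiv ℝ (fun y => fderiv ℝ φ y v) x v| ≤
          Cb * ∫ x in Metric.ball c ρ, |φ x| := by
  intro v hv φ hφ hφc hφs
  have h1top : (1 : WithTop ℕ∞) ≤ ((⊤:ℕ∞) : WithTop ℕ∞) := by
    exact_mod_cast (le_top : (1:ℕ∞) ≤ ⊤)
  set ψ : EuclideanSpace ℝ (Fin n) → ℝ := fun y => fderiv ℝ φ y v with hψdef
  set D2 : EuclideanSpace ℝ (Fin n) → ℝ := fun x => fderiv ℝ ψ x v with hD2def
  set K : Set (EuclideanSpace ℝ (Fin n)) := tsupport φ with hKdef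
  have hKc : IsCompact K := hφc
  obtain ⟨δ, δpos, hδ⟩ := hKc.exists_cthickening_subset_open isOpen_ball hφs
  -- cutoff function
  obtain ⟨χ, hχ0, hχ1, hχ01⟩ :=
    exists_contMDiffMap_zero_one_of_isClosed (n := (⊤ : ℕ∞)) (𝓘(ℝ, EuclideanSpace ℝ (Fin n)))
      (isOpen_thickening (δ := δ) (E := K)).isClosed_compl
      (isClosed_cthickening (δ := δ/2) (E := K))
      (by rw [Set.disjoint_compl_left_iff_subset]
          exact cthickening_subset_thickening' δpos (by linarith) K)
  have hχsm : ContDiff ℝ (⊤ : ℕ∞) χ := contMDiff_iff_contDiff.mp χ.contMDiff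
  have hχsupp : Function.support (χ : EuclideanSpace ℝ (Fin n) → ℝ) ⊆ thickening δ K := by
    intro x hx
    by_contra hxt
    exact hx (hχ0 hxt)
  have hχzero : ∀ x ∉ cthickening δ K, χ x = 0 := by
    intro x hx
    by_contra hne
    exact hx (thickening_subset_cthickening δ K (hχsupp hne))
  have hKΩ : cthickening δ K ⊆ Ω := hδ.trans hsub
  set U : EuclideanSpace ℝ (Fin n) → ℝ := fun x => χ x * u x with hUdef
  have hU : ContDiff ℝ 1 U := by
    rw [contDiff_iff_contDiffAt]
    intro x
    by_cases hx : x ∈ Ω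
    · exact ((hχsm.of_le (by exact_mod_cast (le_top : (1:ℕ∞) ≤ ⊤))).contDiffAt).mul (hu.contDiffAt (hΩ.mem_nhds hx))
    · have h1 : (cthickening δ K)ᶜ ∈ 𝓝 x :=
        (isClosed_cthickening.isOpen_compl).mem_nhds (fun h => hx (hKΩ h))
      have he : U =ᶠ[𝓝 x] (fun _ => (0 : ℝ)) :=
        Filter.eventually_of_mem h1 (fun y hy => by simp [hUdef, hχzero y hy])
      exact (contDiffAt_const (c := (0 : ℝ))).congr_of_eventuallyEq he
  have hUc : HasCompactSupport U :=
    HasCompactSupport.intro (hKc.cthickening (r := δ))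
      (fun x hx => by simp [hUdef, hχzero x hx])
  set g : EuclideanSpace ℝ (Fin n) → ℝ := fun x => fderiv ℝ U x v with hgdef
  have hψsm : ContDiff ℝ (⊤ : ℕ∞) ψ :=
    ((hφ.of_le le_rfl).fderiv_right (m := ((⊤ : ℕ∞) : WithTop ℕ∞)) (by exact_mod_cast le_of_eq (top_add (1:ℕ∞)))).clm_apply contDiff_const
  have hψc : HasCompactSupport ψ :=
    (hφc.fderiv ℝ).comp_left (g := fun L : _ →L[ℝ] ℝ => L v) rfl
  have hgcont : Continuous g := (hU.continuous_fderiv one_ne_zero).clm_apply continuous_const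
  have hUdiff : Differentiable ℝ U := hU.differentiable one_ne_zero
  have hψdiff : Differentiable ℝ ψ := hψsm.differentiable (by simp)
  have hφdiff : Differentiable ℝ φ := hφ.differentiable (by simp)
  -- the effective derivative identity
  have hfd : ∀ z ∈ cthickening (δ/4) K, g z = fderivWithin ℝ u Ω z v := by
    intro z hz
    have hzth : z ∈ thickening (δ/2) K :=
      cthickening_subset_thickening' (by linarith) (by linarith) K hz
    have hzo : thickening (δ/2) K ∈ 𝓝 z := (isOpen_thickening).mem_nhds hzth
    have he : U =ᶠ[𝓝 z] u :=
      Filter.eventually_of_mem hzo (fun y hy => by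
        have h1 : χ y = 1 := hχ1 (thickening_subset_cthickening _ _ hy)
        simp [hUdef, h1])
    have hzΩ : z ∈ Ω := hKΩ (cthickening_mono (by linarith) K hz)
    rw [hgdef]
    simp only
    rw [he.fderiv_eq, ← fderivWithin_of_isOpen hΩ hzΩ]
  have hχK : ∀ x ∈ K, χ x = 1 := fun x hx => hχ1 (self_subset_cthickening _ hx)
  -- D2 vanishes outside K
  have hD2z : ∀ x ∉ K, D2 x = 0 := by
    intro x hx
    have h1 : tsupport ψ ⊆ K := by
      refine subset_trans (closure_mono ?_) (tsupport_fderiv_subset ℝ)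
      intro y hy h0
      exact hy (by simp [hψdef, h0])
    have h2 : x ∉ tsupport (fderiv ℝ ψ) := fun h => hx (h1 (tsupport_fderiv_subset ℝ h))
    have h3 : fderiv ℝ ψ x = 0 := image_eq_zero_of_notMem_tsupport h2
    simp [hD2def, h3]
  -- reduce the set integrals to integrals over the whole space
  have step0 : ∫ x in Metric.ball c ρ, u x * D2 x = ∫ x, U x * D2 x := by
    have e1 : ∀ x, u x * D2 x = U x * D2 x := by
      intro x
      by_cases hx : x ∈ K
      · simp [hUdef, hχK x hx]
      · simp [hD2z x hx]
    calc ∫ x in Metric.ball c ρ, u x * D2 x = ∫ x in Metric.ball c ρ, U x * D2 x := by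
            simp_rw [e1]
      _ = ∫ x, U x * D2 x := by
            apply setIntegral_eq_integral_of_forall_compl_eq_zero
            intro x hx
            simp [hD2z x (fun h => hx (hφs h))]
  have stepR : ∫ x in Metric.ball c ρ, |φ x| = ∫ x, |φ x| := by
    apply setIntegral_eq_integral_of_forall_compl_eq_zero
    intro x hx
    have : φ x = 0 := image_eq_zero_of_notMem_tsupport (fun h => hx (hφs h))
    simp [this]
  -- Lipschitz constants
  obtain ⟨Cu, hCu⟩ := ContDiff.lipschitzWith_of_hasCompactSupport hUc hU one_ne_zero
  obtain ⟨Cψ, hCψ⟩ := ContDiff.lipschitzWith_of_hasCompactSupport hψc hψsm (by simp)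
  obtain ⟨Cφ, hCφ⟩ := ContDiff.lipschitzWith_of_hasCompactSupport hφc (hφ.of_le ((by simp) : (1 : WithTop ℕ∞) ≤ ((⊤ : ℕ∞) : WithTop ℕ∞))) one_ne_zero
  -- integration by parts
  have ibp : ∫ x, g x * ψ x = - ∫ x, U x * D2 x := by
    have h0 := LipschitzWith.integral_lineDeriv_mul_eq (μ := volume) hCu hCψ hψc v
    have l1 : ∀ x, lineDeriv ℝ U x v = g x := fun x => (hUdiff x).lineDeriv_eq_fderiv
    have l2 : ∀ x, lineDeriv ℝ ψ x (-v) = -D2 x := by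
      intro x
      rw [(hψdiff x).lineDeriv_eq_fderiv, map_neg]
    calc ∫ x, g x * ψ x = ∫ x, lineDeriv ℝ U x v * ψ x := by simp_rw [l1]
      _ = ∫ x, lineDeriv ℝ ψ x (-v) * U x := h0
      _ = ∫ x, -(U x * D2 x) := by
            congr 1
            funext x
            rw [l2 x]
            ring
      _ = - ∫ x, U x * D2 x := integral_neg _
  -- the difference quotient limit
  have tend := LipschitzWith.integral_inv_smul_sub_mul_tendsto_integral_lineDeriv_mul'
      (μ := volume) hCφ hφc hgcont v
  have lim_eq : ∫ x, lineDeriv ℝ φ x v * g x = ∫ x, ψ x * g x := by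
    congr 1
    funext x
    rw [(hφdiff x).lineDeriv_eq_fderiv]
  rw [lim_eq] at tend
  -- uniform bound on the difference quotients
  have bound : ∀ᶠ t in 𝓝[>] (0:ℝ),
      |∫ x, (t⁻¹ • (φ (x + t • v) - φ x)) * g x| ≤ Cb * ∫ x, |φ x| := by
    filter_upwards [Ioc_mem_nhdsGT (show (0:ℝ) < δ/4 by linarith)] with t ht
    obtain ⟨htpos, htle⟩ := ht
    have hφcont : Continuous φ := hCφ.continuous
    have hInt1 : Integrable (fun x => φ (x + t • v) * g x) :=
      Continuous.integrable_of_hasCompactSupport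
        ((hφcont.comp (continuous_add_right _)).mul hgcont)
        ((hφc.comp_homeomorph (Homeomorph.addRight (t • v))).mul_right)
    have hInt2 : Integrable (fun x => φ x * g x) :=
      Continuous.integrable_of_hasCompactSupport (hφcont.mul hgcont) hφc.mul_right
    have hInt3 : Integrable (fun x => g (x - t • v) * φ x) :=
      Continuous.integrable_of_hasCompactSupport
        ((hgcont.comp (continuous_sub_right _)).mul hφcont) hφc.mul_left
    have hInt4 : Integrable (fun x => g x * φ x) :=
      Continuous.integrable_of_hasCompactSupport (hgcont.mul hφcont) hφc.mul_left
    have S3 : ∫ x, φ (x + t • v) * g x = ∫ x, φ x * g (x - t • v) := by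
      have h := integral_add_right_eq_self (μ := volume)
        (fun x => φ x * g (x - t • v)) (t • v)
      simpa using h
    have main : ∫ x, (φ (x + t • v) - φ x) * g x = ∫ x, (g (x - t • v) - g x) * φ x := by
      simp_rw [sub_mul]
      rw [integral_sub hInt1 hInt2, integral_sub hInt3 hInt4, S3]
      congr 1
      · congr 1; funext x; ring
      · congr 1; funext x; ring
    have rearr : ∫ x, (t⁻¹ • (φ (x + t • v) - φ x)) * g x
        = ∫ x, (t⁻¹ * (g (x - t • v) - g x)) * φ x := by
      calc ∫ x, (t⁻¹ • (φ (x + t • v) - φ x)) * g x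
          = t⁻¹ * ∫ x, (φ (x + t • v) - φ x) * g x := by
            rw [← integral_const_mul]
            congr 1; funext x; simp [smul_eq_mul]; ring
        _ = t⁻¹ * ∫ x, (g (x - t • v) - g x) * φ x := by rw [main]
        _ = ∫ x, (t⁻¹ * (g (x - t • v) - g x)) * φ x := by
            rw [← integral_const_mul]
            congr 1; funext x; ring
    rw [rearr]
    have hIntBound : Integrable (fun x => Cb * |φ x|) :=
      (Continuous.integrable_of_hasCompactSupport hφcont.abs hφc.abs).const_mul Cb
    have hptwise : ∀ x, ‖(t⁻¹ * (g (x - t • v) - g x)) * φ x‖ ≤ Cb * |φ x| := by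
      intro x
      by_cases hx : φ x = 0
      · simp [hx]
      · have hxK : x ∈ K := subset_tsupport φ hx
        have hx1 : x ∈ cthickening (δ/4) K := self_subset_cthickening _ hxK
        have hx2 : x - t • v ∈ cthickening (δ/4) K := by
          apply mem_cthickening_of_dist_le (x - t • v) x (δ/4) K hxK
          rw [dist_eq_norm]
          have : x - t • v - x = -(t • v) := by abel
          rw [this, norm_neg, norm_smul, hv, mul_one, Real.norm_eq_abs,
            abs_of_pos htpos]
          exact htle
        have hb1 : x ∈ Metric.ball c ρ := hδ (cthickening_mono (by linarith) K hx1)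
        have hb2 : x - t • v ∈ Metric.ball c ρ := hδ (cthickening_mono (by linarith) K hx2)
        have hgr := hgrad x hb1 (x - t • v) hb2
        have hxy : x - (x - t • v) = t • v := by abel
        rw [hxy, ContinuousLinearMap.map_smul, ContinuousLinearMap.map_smul] at hgr
        have hnorm : ‖t • v‖ = t := by
          rw [norm_smul, hv, mul_one, Real.norm_eq_abs, abs_of_pos htpos]
        rw [hnorm] at hgr
        set A := fderivWithin ℝ u Ω x v
        set B := fderivWithin ℝ u Ω (x - t • v) v
        have hgr' : |t * A - t * B| ≤ Cb * t ^ 2 := by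
          simpa [smul_eq_mul] using hgr
        have hAB : |A - B| ≤ Cb * t := by
          have h1 : |t * (A - B)| ≤ Cb * t ^ 2 := by rw [mul_sub]; exact hgr'
          rw [abs_mul, abs_of_pos htpos] at h1
          nlinarith [abs_nonneg (A - B)]
        have hgx : g x = A := hfd x hx1
        have hgx2 : g (x - t • v) = B := hfd (x - t • v) hx2
        rw [hgx, hgx2, Real.norm_eq_abs, abs_mul, abs_mul, abs_inv, abs_of_pos htpos]
        have h2 : |B - A| ≤ Cb * t := by rw [abs_sub_comm]; exact hAB
        calc t⁻¹ * |B - A| * |φ x| ≤ t⁻¹ * (Cb * t) * |φ x| := by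
              apply mul_le_mul_of_nonneg_right _ (abs_nonneg _)
              exact mul_le_mul_of_nonneg_left h2 (by positivity)
          _ = Cb * |φ x| := by field_simp
    calc |∫ x, (t⁻¹ * (g (x - t • v) - g x)) * φ x|
        ≤ ∫ x, Cb * |φ x| := by
          rw [← Real.norm_eq_abs]
          exact norm_integral_le_of_norm_le hIntBound (Filter.Eventually.of_forall hptwise)
      _ = Cb * ∫ x, |φ x| := integral_const_mul Cb _
  -- pass to the limit
  have key : |∫ x, ψ x * g x| ≤ Cb * ∫ x, |φ x| := by
    have tendabs : Filter.Tendsto (fun t => |∫ x, (t⁻¹ • (φ (x + t • v) - φ x)) * g x|)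
        (𝓝[>] (0:ℝ)) (𝓝 |∫ x, ψ x * g x|) := (continuous_abs.tendsto _).comp tend
    exact le_of_tendsto tendabs bound
  -- conclusion
  calc |∫ x in Metric.ball c ρ, u x * D2 x|
      = |∫ x, U x * D2 x| := by rw [step0]
    _ = |∫ x, ψ x * g x| := by
        rw [show ∫ x, U x * D2 x = - ∫ x, g x * ψ x from by rw [ibp]; ring,
          abs_neg]
        congr 1
        congr 1; funext x; ring
    _ ≤ Cb * ∫ x, |φ x| := key
    _ = Cb * ∫ x in Metric.ball c ρ, |φ x| := by rw [stepR]
end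
end
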